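/- arXiv:1511.02201 — 10 statements merged into one kernel-verified Lean document; each statement's English description precedes it below -/
import Mathlib

section
/- Let n ≥ 1, let γ > 0, and let ε_i > 0 for i = 1,…,n. Set S = Σ_{j=1}^n 1/ε_j and define d_i* = 1/(2 ε_i (1 + γ S)) for each i. Then d* satisfies the first-order stationarity conditions of the grand-coalition problem: for every i, 1 − 2γ Σ_{j=1}^n d_j* − 2 ε_i d_i* = 0. -/
/-- The grand-coalition candidate `d i = 1/(2 εᵢ (1 + γ S))` with
`S = ∑ⱼ 1/εⱼ` satisfies the first-order stationarity conditions of the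
grand-coalition problem of the two-period storage game:
for every `i`, `1 − 2γ ∑ⱼ dⱼ − 2 εᵢ dᵢ = 0`. -/
theorem gc_stationarity (n : ℕ) (hn : 1 ≤ n) (γ : ℝ) (hγ : 0 < γ)
    (ε : Fin n → ℝ) (hε : ∀ i, 0 < ε i)
    (S : ℝ) (hS : S = ∑ j, 1 / ε j)
    (d : Fin n → ℝ) (hd : ∀ i, d i = 1 / (2 * ε i * (1 + γ * S))) :
    ∀ i, 1 - 2 * γ * (∑ j, d j) - 2 * ε i * d i = 0 := by
  have hSpos : 0 ≤ S := by
    rw [hS]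
    exact Finset.sum_nonneg fun j _ => div_nonneg zero_le_one (hε j).le
  have hpos : 0 < 1 + γ * S := by positivity
  have key : ∀ j, d j = (1 / ε j) * (1 / (2 * (1 + γ * S))) := by
    intro j
    rw [hd j]
    have := (hε j).ne'
    have := hpos.ne'
    field_simp
  have hsum : ∑ j, d j = S / (2 * (1 + γ * S)) := by
    calc ∑ j, d j = (∑ j, 1 / ε j) * (1 / (2 * (1 + γ * S))) := by
          rw [Finset.sum_congr rfl fun j _ => key j, ← Finset.sum_mul]
      _ = S / (2 * (1 + γ * S)) := by rw [← hS]; ring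
  intro i
  rw [hsum, hd i]
  have hεi := (hε i).ne'
  field_simp
  ring
end

section
/- Let n ≥ 1, γ > 0, ε_i > 0 for i = 1,…,n, S = Σ_{j=1}^n 1/ε_j, and d_i* = 1/(2 ε_i (1 + γ S)). Then d* is the unique global maximizer over ℝ^n of the aggregate profit F(d) = Σ_i d_i − γ (Σ_i d_i)² − Σ_i ε_i d_i²; that is, F(d) ≤ F(d*) for all d ∈ ℝ^n, with equality only if d = d*. -/
/-- `d* i = 1/(2 εᵢ (1 + γ S))` with `S = ∑ⱼ 1/εⱼ` is the unique
global maximizer over `ℝⁿ` of the aggregate profit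
`F(d) = ∑ᵢ dᵢ − γ (∑ᵢ dᵢ)² − ∑ᵢ εᵢ dᵢ²`. -/
theorem gc_unique_maximizer (n : ℕ) (hn : 1 ≤ n) (γ : ℝ) (hγ : 0 < γ)
    (ε : Fin n → ℝ) (hε : ∀ i, 0 < ε i)
    (S : ℝ) (hS : S = ∑ j, 1 / ε j)
    (dstar : Fin n → ℝ) (hdstar : ∀ i, dstar i = 1 / (2 * ε i * (1 + γ * S)))
    (F : (Fin n → ℝ) → ℝ)
    (hF : ∀ d : Fin n → ℝ,
      F d = (∑ i, d i) - γ * (∑ i, d i) ^ 2 - ∑ i, ε i * (d i) ^ 2) :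
    ∀ d : Fin n → ℝ, F d ≤ F dstar ∧ (F d = F dstar → d = dstar) := by
  have hSpos : 0 < S := by
    rw [hS]
    apply Finset.sum_pos (fun i _ => by have := hε i; positivity)
    exact Finset.univ_nonempty_iff.mpr ⟨⟨0, hn⟩⟩
  have hA : (0:ℝ) < 1 + γ * S := by nlinarith
  have hAne : (1 + γ * S) ≠ 0 := ne_of_gt hA
  set c : ℝ := 1 / (1 + γ * S) with hcdef
  have hc1 : c * (1 + γ * S) = 1 := by rw [hcdef]; field_simp
  have hds : ∀ i, dstar i = c * (1 / ε i) / 2 := by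
    intro i
    have hεi := (hε i).ne'
    rw [hdstar i, hcdef]
    field_simp
  have h1 : ∑ i, dstar i = c * S / 2 := by
    rw [hS]
    calc ∑ i, dstar i = ∑ i, c * (1 / ε i) / 2 :=
          Finset.sum_congr rfl (fun i _ => hds i)
      _ = c * (∑ i, 1 / ε i) / 2 := by rw [Finset.mul_sum, Finset.sum_div]
  have hpt : ∀ (d : Fin n → ℝ) (i : Fin n), ε i * (d i - dstar i) ^ 2
      = ε i * (d i) ^ 2 - c * d i + c ^ 2 * (1 / ε i) / 4 := by
    intro d i
    have hεi := (hε i).ne'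
    rw [hds i]
    field_simp
    ring
  have h2 : ∀ d : Fin n → ℝ, ∑ i, ε i * (d i - dstar i) ^ 2
      = (∑ i, ε i * (d i) ^ 2) - c * (∑ i, d i) + c ^ 2 * S / 4 := by
    intro d
    rw [hS]
    calc ∑ i, ε i * (d i - dstar i) ^ 2
        = ∑ i, (ε i * (d i) ^ 2 - c * d i + c ^ 2 * (1 / ε i) / 4) :=
          Finset.sum_congr rfl (fun i _ => hpt d i)
      _ = (∑ i, ε i * (d i) ^ 2) - c * (∑ i, d i) + c ^ 2 * (∑ i, 1 / ε i) / 4 := by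
          rw [Finset.sum_add_distrib, Finset.sum_sub_distrib, Finset.mul_sum,
            Finset.mul_sum, Finset.sum_div]
  have h3 : ∑ i, ε i * (dstar i) ^ 2 = c ^ 2 * S / 4 := by
    have := h2 dstar
    simp only [sub_self] at this
    norm_num at this
    rw [h1] at this
    nlinarith [this]
  have hkey : ∀ d : Fin n → ℝ,
      F d = F dstar - (γ * (∑ i, (d i - dstar i)) ^ 2 + ∑ i, ε i * (d i - dstar i) ^ 2) := by
    intro d
    have e1 : ∑ i, (d i - dstar i) = (∑ i, d i) - c * S / 2 := by
      rw [Finset.sum_sub_distrib, h1]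
    rw [hF d, hF dstar, e1, h2 d, h1, h3]
    linear_combination (c * S / 2 - (∑ i, d i)) * hc1
  intro d
  have hk := hkey d
  have hnn1 : (0:ℝ) ≤ γ * (∑ i, (d i - dstar i)) ^ 2 := mul_nonneg hγ.le (sq_nonneg _)
  have hnn2 : (0:ℝ) ≤ ∑ i, ε i * (d i - dstar i) ^ 2 :=
    Finset.sum_nonneg fun i _ => mul_nonneg (hε i).le (sq_nonneg _)
  refine ⟨by rw [hk]; linarith, fun heq => ?_⟩
  have hz : ∑ i, ε i * (d i - dstar i) ^ 2 = 0 := by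
    rw [hk] at heq; linarith
  funext i
  have hi := (Finset.sum_eq_zero_iff_of_nonneg
    (fun i _ => mul_nonneg (hε i).le (sq_nonneg _) : ∀ i ∈ Finset.univ, (0:ℝ) ≤ ε i * (d i - dstar i) ^ 2)).mp
    hz i (Finset.mem_univ i)
  have hεi := (hε i).ne'
  have : (d i - dstar i) ^ 2 = 0 := by
    rcases mul_eq_zero.mp hi with h | h
    · exact absurd h hεi
    · exact h
  have := (pow_eq_zero_iff two_ne_zero).mp this
  linarith [sub_eq_zero.mp this]
end

section
/- Let n ≥ 1, γ > 0, ε_i > 0 for i = 1,…,n, S = Σ_{j=1}^n 1/ε_j, and d_i* = 1/(2 ε_i (1 + γ S)). Then the aggregate profit of the grand-coalition solution equals F(d*) = S / (4 (1 + γ S)). -/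
/-- the aggregate profit at the grand-coalition solution
`d* i = 1/(2 εᵢ (1 + γ S))` equals `S / (4 (1 + γ S))`. -/
theorem gc_aggregate_profit (n : ℕ) (hn : 1 ≤ n) (γ : ℝ) (hγ : 0 < γ)
    (ε : Fin n → ℝ) (hε : ∀ i, 0 < ε i)
    (S : ℝ) (hS : S = ∑ j, 1 / ε j)
    (dstar : Fin n → ℝ) (hdstar : ∀ i, dstar i = 1 / (2 * ε i * (1 + γ * S))) :
    (∑ i, dstar i) - γ * (∑ i, dstar i) ^ 2 - (∑ i, ε i * (dstar i) ^ 2)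
      = S / (4 * (1 + γ * S)) := by
  have hS0 : 0 ≤ S := by
    rw [hS]
    exact Finset.sum_nonneg fun i _ => div_nonneg zero_le_one (hε i).le
  have hA : (0:ℝ) < 1 + γ * S := by positivity
  have hAne : (1 + γ * S) ≠ 0 := hA.ne'
  have h1 : (∑ i, dstar i) = S / (2 * (1 + γ * S)) := by
    calc (∑ i, dstar i) = ∑ i, (1 / ε i) / (2 * (1 + γ * S)) := by
          refine Finset.sum_congr rfl fun i _ => ?_
          rw [hdstar i]
          have := (hε i).ne'
          field_simp
      _ = (∑ j, 1 / ε j) / (2 * (1 + γ * S)) := by rw [Finset.sum_div]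
      _ = S / (2 * (1 + γ * S)) := by rw [← hS]
  have h2 : (∑ i, ε i * (dstar i) ^ 2) = S / (4 * (1 + γ * S) ^ 2) := by
    calc (∑ i, ε i * (dstar i) ^ 2)
        = ∑ i, (1 / ε i) / (4 * (1 + γ * S) ^ 2) := by
          refine Finset.sum_congr rfl fun i _ => ?_
          rw [hdstar i]
          have := (hε i).ne'
          field_simp
          ring
      _ = (∑ j, 1 / ε j) / (4 * (1 + γ * S) ^ 2) := by rw [Finset.sum_div]
      _ = S / (4 * (1 + γ * S) ^ 2) := by rw [← hS]
  rw [h1, h2]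
  field_simp
  ring
end

section
/- Let n ≥ 1, γ > 0, ε_i > 0 for i = 1,…,n, let T = Σ_{j=1}^n 1/(2 ε_j + γ), and define d_i' = 1/((2 ε_i + γ)(1 + γ T)). Then d' is a Nash equilibrium of the two-period storage game: for every i, the function x ↦ x − γ x (x + Σ_{j≠i} d_j') − ε_i x² attains its maximum over ℝ at x = d_i'. -/
open Finset

/-- `d' i = 1/((2 εᵢ + γ)(1 + γ T))` with `T = ∑ⱼ 1/(2 εⱼ + γ)` is a
Nash equilibrium of the two-period storage game: each storage's own-profit
function is maximized over ℝ at `d' i`, given the others' actions. -/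
theorem ne_of_closed_form (n : ℕ) (hn : 1 ≤ n) (γ : ℝ) (hγ : 0 < γ)
    (ε : Fin n → ℝ) (hε : ∀ i, 0 < ε i)
    (T : ℝ) (hT : T = ∑ j, 1 / (2 * ε j + γ))
    (d : Fin n → ℝ) (hd : ∀ i, d i = 1 / ((2 * ε i + γ) * (1 + γ * T))) :
    ∀ i, ∀ x : ℝ,
      x - γ * x * (x + ∑ j ∈ univ.erase i, d j) - ε i * x ^ 2 ≤
        d i - γ * d i * (d i + ∑ j ∈ univ.erase i, d j) - ε i * (d i) ^ 2 := by
  intro i x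
  have hTnn : 0 ≤ T := by
    rw [hT]
    apply Finset.sum_nonneg
    intro j _
    have := hε j
    positivity
  have hA : 0 < 1 + γ * T := by positivity
  have hεi : 0 < 2 * ε i + γ := by have := hε i; linarith
  have htot : ∑ j, d j = T / (1 + γ * T) := by
    have : ∀ j, d j = (1 / (2 * ε j + γ)) * (1 / (1 + γ * T)) := by
      intro j
      rw [hd j]
      field_simp
    rw [Finset.sum_congr rfl (fun j _ => this j), ← Finset.sum_mul, ← hT]
    field_simp
  have hS : ∑ j ∈ univ.erase i, d j = T / (1 + γ * T) - d i := by
    rw [Finset.sum_erase_eq_sub (Finset.mem_univ i), htot]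
  have h1 : 1 - γ * (∑ j ∈ univ.erase i, d j) = 2 * (γ + ε i) * d i := by
    rw [hS, hd i]
    field_simp
    ring
  have key : (d i - γ * d i * (d i + ∑ j ∈ univ.erase i, d j) - ε i * (d i) ^ 2)
      - (x - γ * x * (x + ∑ j ∈ univ.erase i, d j) - ε i * x ^ 2)
      = (γ + ε i) * (x - d i) ^ 2 := by
    linear_combination (d i - x) * h1
  nlinarith [mul_nonneg (le_of_lt (add_pos hγ (hε i))) (sq_nonneg (x - d i)), key]
end

section
/- Let n ≥ 1, γ > 0, and ε_i > 0 for i = 1,…,n. Then the two-period storage game has a unique Nash equilibrium, namely d_i' = 1/((2 ε_i + γ)(1 + γ T)) with T = Σ_{j=1}^n 1/(2 ε_j + γ): every profile d ∈ ℝ^n such that for each i, d_i maximizes x ↦ x − γ x (x + Σ_{j≠i} d_j) − ε_i x² over ℝ, satisfies d = d'. Equivalently, the linear system 1 − γ Σ_{j=1}^n d_j − (γ + 2 ε_i) d_i = 0 (i = 1,…,n) has the unique solution d'. -/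
open Finset

/-- the two-period storage game has a unique Nash equilibrium,
namely `d' i = 1/((2 εᵢ + γ)(1 + γ T))` with `T = ∑ⱼ 1/(2 εⱼ + γ)`:
`d'` is a Nash equilibrium, every Nash equilibrium equals `d'`, and
equivalently the first-order linear system
`1 − γ ∑ⱼ dⱼ − (γ + 2 εᵢ) dᵢ = 0` has `d'` as its unique solution. -/
theorem ne_unique (n : ℕ) (hn : 1 ≤ n) (γ : ℝ) (hγ : 0 < γ)
    (ε : Fin n → ℝ) (hε : ∀ i, 0 < ε i)
    (T : ℝ) (hT : T = ∑ j, 1 / (2 * ε j + γ))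
    (d' : Fin n → ℝ) (hd' : ∀ i, d' i = 1 / ((2 * ε i + γ) * (1 + γ * T))) :
    (∀ i, ∀ x : ℝ,
      x - γ * x * (x + ∑ j ∈ univ.erase i, d' j) - ε i * x ^ 2 ≤
        d' i - γ * d' i * (d' i + ∑ j ∈ univ.erase i, d' j) - ε i * (d' i) ^ 2) ∧
    (∀ d : Fin n → ℝ,
      (∀ i, ∀ x : ℝ,
        x - γ * x * (x + ∑ j ∈ univ.erase i, d j) - ε i * x ^ 2 ≤
          d i - γ * d i * (d i + ∑ j ∈ univ.erase i, d j) - ε i * (d i) ^ 2) →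
      d = d') ∧
    (∀ d : Fin n → ℝ,
      (∀ i, 1 - γ * (∑ j, d j) - (γ + 2 * ε i) * d i = 0) ↔ d = d') := by
  have hpos : ∀ i, (0:ℝ) < 2 * ε i + γ := fun i => by nlinarith [hε i]
  have hposne : ∀ i, (2 * ε i + γ) ≠ 0 := fun i => (hpos i).ne'
  have hTnn : 0 ≤ T := by
    rw [hT]
    exact Finset.sum_nonneg fun j _ => one_div_nonneg.mpr (hpos j).le
  have h1 : (0:ℝ) < 1 + γ * T := by nlinarith
  have h1ne : (1 + γ * T) ≠ 0 := h1.ne'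
  -- key: NE condition for player i ↔ first-order condition
  have key : ∀ (d : Fin n → ℝ) (i : Fin n),
      (∀ x : ℝ,
        x - γ * x * (x + ∑ j ∈ univ.erase i, d j) - ε i * x ^ 2 ≤
          d i - γ * d i * (d i + ∑ j ∈ univ.erase i, d j) - ε i * (d i) ^ 2) ↔
      1 - γ * (∑ j, d j) - (γ + 2 * ε i) * d i = 0 := by
    intro d i
    have hS : ∑ j, d j = d i + ∑ j ∈ univ.erase i, d j :=
      (Finset.add_sum_erase univ d (mem_univ i)).symm
    set S := ∑ j ∈ univ.erase i, d j with hSdef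
    rw [hS]
    have ha : (0:ℝ) < γ + ε i := by nlinarith [hε i]
    constructor
    · intro h
      obtain ⟨t, h2a⟩ : ∃ t : ℝ, 2 * (γ + ε i) * t = 1 - γ * S - 2 * (γ + ε i) * d i :=
        ⟨(1 - γ * S - 2 * (γ + ε i) * d i) / (2 * (γ + ε i)), by field_simp⟩
      have h3 : t * (1 - γ * S - 2 * (γ + ε i) * d i) = 2 * (γ + ε i) * t ^ 2 := by
        linear_combination -t * h2a
      have ht' := h (d i + t)
      have ht2 : (γ + ε i) * t ^ 2 ≤ 0 := by nlinarith [ht', h3]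
      have h5 : t ^ 2 ≤ 0 := by nlinarith [ht2]
      have ht0 : t = 0 := sq_eq_zero_iff.mp (le_antisymm h5 (sq_nonneg t))
      rw [ht0, mul_zero] at h2a
      linear_combination -h2a
    · intro h x
      have hineq : d i - γ * d i * (d i + S) - ε i * (d i) ^ 2 -
          (x - γ * x * (x + S) - ε i * x ^ 2) = (γ + ε i) * (d i - x) ^ 2 := by
        linear_combination (d i - x) * h
      nlinarith [mul_nonneg ha.le (sq_nonneg (d i - x)), hineq]
  -- sum of d'
  have hsum : ∑ j, d' j = T / (1 + γ * T) := by
    calc ∑ j, d' j = ∑ j, (1 / (2 * ε j + γ)) / (1 + γ * T) :=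
          Finset.sum_congr rfl fun j _ => by rw [hd' j, div_div]
      _ = T / (1 + γ * T) := by rw [← Finset.sum_div, ← hT]
  have hFOC : ∀ i, 1 - γ * (∑ j, d' j) - (γ + 2 * ε i) * d' i = 0 := by
    intro i
    have h2e := hposne i
    rw [hsum, hd' i]
    field_simp
    ring
  -- uniqueness of the FOC solution
  have huniq : ∀ d : Fin n → ℝ,
      (∀ i, 1 - γ * (∑ j, d j) - (γ + 2 * ε i) * d i = 0) → d = d' := by
    intro d hd
    have hdi : ∀ i, d i = (1 - γ * ∑ j, d j) / (2 * ε i + γ) := by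
      intro i
      rw [eq_div_iff (hposne i)]
      linarith [hd i]
    have hDeq : ∑ j, d j = (1 - γ * ∑ j, d j) * T := by
      calc ∑ j, d j = ∑ i, (1 - γ * ∑ j, d j) / (2 * ε i + γ) :=
            Finset.sum_congr rfl fun i _ => hdi i
        _ = ∑ i, (1 - γ * ∑ j, d j) * (1 / (2 * ε i + γ)) :=
            Finset.sum_congr rfl fun i _ => (mul_one_div _ _).symm
        _ = (1 - γ * ∑ j, d j) * ∑ i, 1 / (2 * ε i + γ) := (Finset.mul_sum _ _ _).symm
        _ = (1 - γ * ∑ j, d j) * T := by rw [← hT]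
    have hDval : ∑ j, d j = T / (1 + γ * T) := by
      rw [eq_div_iff h1ne]
      linear_combination hDeq
    funext i
    have h2e := hposne i
    rw [hdi i, hd' i, hDval]
    field_simp
    ring
  refine ⟨fun i => (key d' i).mpr (hFOC i), fun d hd => huniq d (fun i => (key d i).mp (hd i)),
    fun d => ⟨huniq d, fun h => h ▸ hFOC⟩⟩
end

section
/- Let γ > 0 and consider the two-period storage game with n storages all having cost coefficient ε_i = 0. The unique Nash equilibrium is d_i' = 1/(γ(n+1)) for every i, the aggregate Nash-equilibrium profit equals n/(γ (n+1)²), and this aggregate profit tends to 0 as n → ∞. (Second part of Lemma 1: the aggregate profit under the Nash-equilibrium solution approaches zero as the number of storages increases.) -/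
open Finset

/-!
Facing aggregate rival action `s`, storage `i`'s profit `x - γ x (x + s)` is a concave parabola
in `x`, so `d i` is a best response exactly when the first-order condition
`γ (2 d i + s) = 1` holds. Since `s = S - d i` with `S = ∑ j, d j`, this reads
`γ (d i + S) = 1` for every `i`: all actions equal `1/γ - S`, and summing gives
`S = n/(γ(n+1))`, whence `d i = 1/(γ(n+1))`. The aggregate profit `n c (1 - γ n c)` at
`c = 1/(γ(n+1))` is `n/(γ(n+1)²) = γ⁻¹ · n/(n+1) · 1/(n+1) → 0`.
-/

section BestResponse

variable {K : Type*} [Field K] [LinearOrder K] [IsStrictOrderedRing K]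

theorem forall_profit_le_iff {γ : K} (hγ : 0 < γ) (s y : K) :
    (∀ x, x - γ * x * (x + s) ≤ y - γ * y * (y + s)) ↔ γ * (2 * y + s) = 1 := by
  have gap : ∀ t, (y - γ * y * (y + s)) - ((y + t) - γ * (y + t) * (y + t + s)) =
      γ * t ^ 2 + (γ * (2 * y + s) - 1) * t := fun t => by ring
  constructor
  · intro hmax
    set c := γ * (2 * y + s) - 1
    -- at the vertex `t = -c/(2γ)` of the parabola the gap is `-c²/(4γ)`
    obtain ⟨t, h2γt⟩ : ∃ t, 2 * γ * t = -c := ⟨-c / (2 * γ), by field_simp⟩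
    have h0 : 0 ≤ γ * t ^ 2 + c * t := by rw [← gap]; linarith [hmax (y + t)]
    have hc : 4 * γ * (γ * t ^ 2 + c * t) = -c ^ 2 := by
      rw [show 4 * γ * (γ * t ^ 2 + c * t) = (2 * γ * t) ^ 2 + 2 * c * (2 * γ * t) by ring, h2γt]
      ring
    have hc0 : c ^ 2 = 0 := by linarith [hc ▸ mul_nonneg (by positivity) h0, sq_nonneg c]
    linear_combination pow_eq_zero_iff two_ne_zero |>.mp hc0
  · intro hfoc x
    have := gap (x - y)
    rw [hfoc, sub_self, zero_mul, add_zero, add_sub_cancel] at this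
    linarith [mul_nonneg hγ.le (sq_nonneg (x - y))]

end BestResponse

theorem forall_mul_add_sum_eq_one_iff {ι : Type*} [Fintype ι] {γ : ℝ} (hγ : γ ≠ 0)
    (d : ι → ℝ) :
    (∀ i, γ * (d i + ∑ j, d j) = 1) ↔ d = fun _ => 1 / (γ * (Fintype.card ι + 1)) := by
  have hn : (Fintype.card ι : ℝ) + 1 ≠ 0 := by positivity
  constructor
  · intro hfoc
    set S := ∑ j, d j
    have hsum : γ * S = Fintype.card ι * (1 - γ * S) := by
      calc γ * S = ∑ i, γ * d i := mul_sum ..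
        _ = ∑ _i : ι, (1 - γ * S) := sum_congr rfl fun i _ => by linear_combination hfoc i
        _ = Fintype.card ι * (1 - γ * S) := by rw [sum_const, card_univ, nsmul_eq_mul]
    funext i
    field_simp
    linear_combination (Fintype.card ι + 1 : ℝ) * hfoc i - hsum
  · rintro rfl i
    simp only [sum_const, card_univ, nsmul_eq_mul]
    field_simp
    ring

theorem tendsto_natCast_div_mul_add_one_sq (γ : ℝ) :
    Filter.Tendsto (fun n : ℕ => (n : ℝ) / (γ * ((n : ℝ) + 1) ^ 2)) Filter.atTop (nhds 0) := by
  have h := ((tendsto_natCast_div_add_atTop (1 : ℝ)).const_mul γ⁻¹).mul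
    tendsto_one_div_add_atTop_nhds_zero_nat
  rw [mul_zero] at h
  refine h.congr fun n => ?_
  field_simp

/-- second part of Lemma 1: with zero cost coefficients, the
unique Nash equilibrium of the two-period storage game is
`d i = 1/(γ(n+1))` for every `i`, the aggregate equilibrium profit equals
`n/(γ(n+1)²)`, and this aggregate profit tends to `0` as `n → ∞`. -/
theorem ne_profit_vanishes (γ : ℝ) (hγ : 0 < γ) :
    (∀ n : ℕ, 1 ≤ n → ∀ d : Fin n → ℝ,
      ((∀ i, ∀ x : ℝ,
          x - γ * x * (x + ∑ j ∈ univ.erase i, d j) ≤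
            d i - γ * d i * (d i + ∑ j ∈ univ.erase i, d j)) ↔
        d = fun _ => 1 / (γ * ((n : ℝ) + 1)))) ∧
    (∀ n : ℕ, 1 ≤ n →
      (∑ _i : Fin n, (1 / (γ * ((n : ℝ) + 1)) -
          γ * (1 / (γ * ((n : ℝ) + 1))) * ∑ _j : Fin n, 1 / (γ * ((n : ℝ) + 1))))
        = (n : ℝ) / (γ * ((n : ℝ) + 1) ^ 2)) ∧
    Filter.Tendsto (fun n : ℕ => (n : ℝ) / (γ * ((n : ℝ) + 1) ^ 2))
      Filter.atTop (nhds 0) := by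
  refine ⟨fun n _ d => ?_, fun n _ => ?_, tendsto_natCast_div_mul_add_one_sq γ⟩
  · have best_response : ∀ i, γ * (2 * d i + ∑ j ∈ univ.erase i, d j) = 1 ↔
        γ * (d i + ∑ j, d j) = 1 := fun i => by
      rw [sum_erase_eq_sub (mem_univ i)]
      ring_nf
    simp only [forall_profit_le_iff hγ, best_response]
    simpa using forall_mul_add_sum_eq_one_iff hγ.ne' d
  · simp only [sum_const, card_univ, Fintype.card_fin, nsmul_eq_mul]
    field_simp
    ring
end

section
/- Let n ≥ 1, γ > 0, ε_i > 0 for i = 1,…,n, S = Σ_{j=1}^n 1/ε_j, and d_i* = 1/(2 ε_i (1 + γ S)). Define the artificial cost coefficients a_i = −γ(1 − ε_i S) and b_i = −a_i / (2 ε_i (1 + γ S)). Then d* is a Nash equilibrium of the game with artificial costs: for every i, the function x ↦ x − γ x (x + Σ_{j≠i} d_j*) − ε_i x² − a_i x² − b_i x attains its unique maximum over ℝ at x = d_i*. Hence the artificial Nash equilibrium coincides with the grand-coalition solution (first claim of Lemma 2). -/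
open Finset

/-!
With these coefficients, `bᵢ x` cancels the cross term `γ x Σ_{j≠i} d_j*` and the quadratic
coefficient `γ + εᵢ + aᵢ` becomes `εᵢ (1 + γ S)`, so the artificial profit of storage `i` is
`x - εᵢ (1 + γ S) x²`: a strictly concave parabola whose vertex is `d_i*`.
-/

theorem sub_mul_sq_le_and_eq_imp {p c x₀ : ℝ} (hc : 0 < c) (hx₀ : 2 * c * x₀ = p) (x : ℝ) :
    p * x - c * x ^ 2 ≤ p * x₀ - c * x₀ ^ 2 ∧
      (p * x - c * x ^ 2 = p * x₀ - c * x₀ ^ 2 → x = x₀) := by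
  have gap : (p * x₀ - c * x₀ ^ 2) - (p * x - c * x ^ 2) = c * (x - x₀) ^ 2 := by
    linear_combination (x - x₀) * hx₀
  refine ⟨by nlinarith [sq_nonneg (x - x₀)], fun heq => ?_⟩
  have : c * (x - x₀) ^ 2 = 0 := by rw [← gap, heq, sub_self]
  simpa [hc.ne', sub_eq_zero] using this

theorem sum_erase_one_div_two_mul {ι : Type*} [Fintype ι] [DecidableEq ι]
    (ε : ι → ℝ) (K : ℝ) (i : ι) :
    ∑ j ∈ univ.erase i, 1 / (2 * ε j * K) = (∑ j, 1 / ε j) / (2 * K) - 1 / (2 * ε i * K) := by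
  rw [sum_erase_eq_sub (mem_univ i), sum_div]
  congr 1
  exact sum_congr rfl fun j _ => by ring

theorem acf_fixes_ne_general (n : ℕ) (γ : ℝ) (hγ : 0 < γ)
    (ε : Fin n → ℝ) (hε : ∀ i, 0 < ε i)
    (S : ℝ) (hS : S = ∑ j, 1 / ε j)
    (dstar : Fin n → ℝ) (hdstar : ∀ i, dstar i = 1 / (2 * ε i * (1 + γ * S)))
    (a b : Fin n → ℝ)
    (ha : ∀ i, a i = -γ * (1 - ε i * S))
    (hb : ∀ i, b i = -a i / (2 * ε i * (1 + γ * S))) :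
    ∀ i, ∀ x : ℝ,
      (x - γ * x * (x + ∑ j ∈ univ.erase i, dstar j) - ε i * x ^ 2
          - a i * x ^ 2 - b i * x ≤
        dstar i - γ * dstar i * (dstar i + ∑ j ∈ univ.erase i, dstar j)
          - ε i * (dstar i) ^ 2 - a i * (dstar i) ^ 2 - b i * dstar i) ∧
      (x - γ * x * (x + ∑ j ∈ univ.erase i, dstar j) - ε i * x ^ 2
          - a i * x ^ 2 - b i * x =
        dstar i - γ * dstar i * (dstar i + ∑ j ∈ univ.erase i, dstar j)
          - ε i * (dstar i) ^ 2 - a i * (dstar i) ^ 2 - b i * dstar i →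
        x = dstar i) := by
  intro i x
  have hS₀ : 0 ≤ S := hS ▸ sum_nonneg fun j _ => (one_div_pos.2 (hε j)).le
  have hK : 0 < 1 + γ * S := by positivity
  have hεi := (hε i).ne'
  have hrest : ∑ j ∈ univ.erase i, dstar j = S / (2 * (1 + γ * S)) - dstar i := by
    simp only [hdstar]
    rw [sum_erase_one_div_two_mul, ← hS]
  have hbi : b i = -γ * (S / (2 * (1 + γ * S)) - dstar i) := by
    rw [hb, ha, hdstar]
    field_simp
    ring
  have hprofit : ∀ y, y - γ * y * (y + ∑ j ∈ univ.erase i, dstar j) - ε i * y ^ 2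
      - a i * y ^ 2 - b i * y = 1 * y - ε i * (1 + γ * S) * y ^ 2 := by
    intro y
    rw [hrest, hbi, ha]
    ring
  have hvertex : 2 * (ε i * (1 + γ * S)) * dstar i = 1 := by
    rw [hdstar]
    field_simp
  simp only [hprofit]
  exact sub_mul_sq_le_and_eq_imp (mul_pos (hε i) hK) hvertex x

/-- first claim of Lemma 2: with artificial cost coefficients
`aᵢ = −γ(1 − εᵢ S)` and `bᵢ = −aᵢ/(2 εᵢ (1 + γ S))`, the grand-coalition
solution `d* i = 1/(2 εᵢ (1 + γ S))` is a Nash equilibrium of the game with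
artificial costs: each storage's artificial profit attains its unique maximum
over ℝ at `d* i`. -/
theorem acf_fixes_ne (n : ℕ) (hn : 1 ≤ n) (γ : ℝ) (hγ : 0 < γ)
    (ε : Fin n → ℝ) (hε : ∀ i, 0 < ε i)
    (S : ℝ) (hS : S = ∑ j, 1 / ε j)
    (dstar : Fin n → ℝ) (hdstar : ∀ i, dstar i = 1 / (2 * ε i * (1 + γ * S)))
    (a b : Fin n → ℝ)
    (ha : ∀ i, a i = -γ * (1 - ε i * S))
    (hb : ∀ i, b i = -a i / (2 * ε i * (1 + γ * S))) :
    ∀ i, ∀ x : ℝ,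
      (x - γ * x * (x + ∑ j ∈ univ.erase i, dstar j) - ε i * x ^ 2
          - a i * x ^ 2 - b i * x ≤
        dstar i - γ * dstar i * (dstar i + ∑ j ∈ univ.erase i, dstar j)
          - ε i * (dstar i) ^ 2 - a i * (dstar i) ^ 2 - b i * dstar i) ∧
      (x - γ * x * (x + ∑ j ∈ univ.erase i, dstar j) - ε i * x ^ 2
          - a i * x ^ 2 - b i * x =
        dstar i - γ * dstar i * (dstar i + ∑ j ∈ univ.erase i, dstar j)
          - ε i * (dstar i) ^ 2 - a i * (dstar i) ^ 2 - b i * dstar i →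
        x = dstar i) :=
  acf_fixes_ne_general n γ hγ ε hε S hS dstar hdstar a b ha hb
end

section
/- Let T ≥ 1, β^[t] ∈ ℝ and γ^[t] > 0 for t = 1,…,T, and ε_i > 0 for i = 1,…,n. Set S = Σ_{j=1}^n 1/ε_j, z^[t] = 1 + 2 γ^[t] S, C = Σ_{k=1}^T 1/z^[k], d_i^[t]* = (Σ_{k=1}^T (β^[k] − β^[t])/z^[k]) / (ε_i z^[t] C), and λ* = (Σ_{t=1}^T β^[t]/z^[t]) / C. Then the Karush–Kuhn–Tucker stationarity conditions of the multi-period grand-coalition problem hold: for every i and t, −β^[t] − 2 γ^[t] Σ_{j=1}^n d_j^[t]* − ε_i d_i^[t]* + λ* = 0. -/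
/-- the multi-period grand-coalition solution together with the
multiplier `λ* = (∑ₜ βₜ/zₜ)/C` satisfies the KKT stationarity conditions:
for all `i, t`, `−βₜ − 2 γₜ ∑ⱼ d j t − εᵢ d i t + λ* = 0`. -/
theorem gc_multiperiod_kkt (T n : ℕ) (hT : 1 ≤ T) (hn : 1 ≤ n)
    (β : Fin T → ℝ) (γ : Fin T → ℝ) (hγ : ∀ t, 0 < γ t)
    (ε : Fin n → ℝ) (hε : ∀ i, 0 < ε i)
    (S : ℝ) (hS : S = ∑ j, 1 / ε j)
    (z : Fin T → ℝ) (hz : ∀ t, z t = 1 + 2 * γ t * S)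
    (C : ℝ) (hC : C = ∑ k, 1 / z k)
    (d : Fin n → Fin T → ℝ)
    (hd : ∀ i t, d i t = (∑ k, (β k - β t) / z k) / (ε i * z t * C))
    (lam : ℝ) (hlam : lam = (∑ t, β t / z t) / C) :
    ∀ i t, -β t - 2 * γ t * (∑ j, d j t) - ε i * d i t + lam = 0 := by
  have hnT : Nonempty (Fin T) := ⟨⟨0, by omega⟩⟩
  have hnn : Nonempty (Fin n) := ⟨⟨0, by omega⟩⟩
  have hS0 : 0 < S := by
    rw [hS]
    exact Finset.sum_pos (fun j _ => by have := hε j; positivity) Finset.univ_nonempty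
  have hz0 : ∀ t, 0 < z t := fun t => by rw [hz]; have := hγ t; positivity
  have hC0 : 0 < C := by
    rw [hC]
    exact Finset.sum_pos (fun k _ => by have := hz0 k; positivity) Finset.univ_nonempty
  have hA : ∀ t, (∑ k, (β k - β t) / z k) = C * (lam - β t) := by
    intro t
    have : (∑ k, (β k - β t) / z k) = (∑ k, β k / z k) - β t * (∑ k, 1 / z k) := by
      rw [Finset.mul_sum, ← Finset.sum_sub_distrib]
      congr 1; ext k; field_simp
    rw [this, hlam, ← hC]
    field_simp
  have hdf : ∀ i t, d i t = (lam - β t) / (ε i * z t) := by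
    intro i t
    rw [hd, hA]
    have h1 := (hε i).ne'
    have h2 := (hz0 t).ne'
    have h3 := hC0.ne'
    field_simp
  intro i t
  have hsum : (∑ j, d j t) = S * (lam - β t) / z t := by
    have key : (∑ j, d j t) = ∑ j, (1 / ε j) * ((lam - β t) / z t) := by
      refine Finset.sum_congr rfl fun j _ => ?_
      rw [hdf j t]
      have h1 := (hε j).ne'
      have h2 := (hz0 t).ne'
      field_simp
    rw [key, ← Finset.sum_mul, ← hS]
    ring
  rw [hsum, hdf i t, hz t]
  have h1 := (hε i).ne'
  have h2 : (1 : ℝ) + 2 * γ t * S ≠ 0 := by rw [← hz t]; exact (hz0 t).ne'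
  field_simp
  ring
end

section
/- Let T ≥ 1, β^[t] ∈ ℝ and γ^[t] > 0 for t = 1,…,T, and ε_i > 0 for i = 1,…,n. Set S = Σ_{j=1}^n 1/ε_j, z^[t] = 1 + 2 γ^[t] S, C = Σ_{k=1}^T 1/z^[k], and d_i^[t]* = (Σ_{k=1}^T (β^[k] − β^[t])/z^[k]) / (ε_i z^[t] C). Then d* maximizes the aggregate profit F(d) = Σ_{t=1}^T [ −β^[t] Σ_i d_i^[t] − γ^[t] (Σ_i d_i^[t])² − Σ_i (ε_i/2)(d_i^[t])² ] over all d ∈ ℝ^{n×T} satisfying Σ_{t=1}^T d_i^[t] = 0 for every i. -/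
/-!
The aggregate profit is a concave quadratic, so it suffices to check the KKT conditions at `d*`.
Writing `ν = (∑ₖ βₖ / zₖ) / C` for the `1/z`-weighted mean of the intercepts, the candidate is
`d*ᵢₜ = (ν - βₜ) / (zₜ εᵢ)`. Its deviations `(ν - βₜ) / zₜ` sum to zero over `t`, which is
feasibility, and since `zₜ = 1 + 2 γₜ ∑ⱼ 1/εⱼ` the marginal cost `βₜ + 2 γₜ ∑ⱼ d*ⱼₜ + εᵢ d*ᵢₜ`
equals `ν` for every storage and period, which is stationarity with one common multiplier.
-/

open Finset

namespace StorageArbitrage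

variable {ι κ : Type*} [Fintype κ]

section

variable [Fintype ι]

noncomputable def aggregateProfit (β γ : ι → ℝ) (ε : κ → ℝ) (d : κ → ι → ℝ) : ℝ :=
  ∑ t, (-(β t) * (∑ i, d i t) - γ t * (∑ i, d i t) ^ 2 - ∑ i, ε i / 2 * (d i t) ^ 2)

theorem aggregateProfit_add (β γ : ι → ℝ) (ε : κ → ℝ) (d h : κ → ι → ℝ) :
    aggregateProfit β γ ε (d + h) = aggregateProfit β γ ε d
      - ∑ t, ∑ i, (β t + 2 * γ t * ∑ j, d j t + ε i * d i t) * h i t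
      - ∑ t, (γ t * (∑ i, h i t) ^ 2 + ∑ i, ε i / 2 * (h i t) ^ 2) := by
  simp only [aggregateProfit, ← sum_sub_distrib]
  refine sum_congr rfl fun t _ => ?_
  have hlin : ∑ i, (β t + 2 * γ t * ∑ j, d j t + ε i * d i t) * h i t
      = (β t + 2 * γ t * ∑ j, d j t) * ∑ i, h i t + ∑ i, ε i * d i t * h i t := by
    rw [mul_sum _ _ (β t + 2 * γ t * ∑ j, d j t), ← sum_add_distrib]
    exact sum_congr rfl fun i _ => by ring
  have hquad : ∑ i, ε i / 2 * ((d + h) i t) ^ 2 = ∑ i, ε i / 2 * (d i t) ^ 2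
      + ∑ i, ε i * d i t * h i t + ∑ i, ε i / 2 * (h i t) ^ 2 := by
    rw [← sum_add_distrib, ← sum_add_distrib]
    exact sum_congr rfl fun i _ => by simp only [Pi.add_apply]; ring
  have hagg : ∑ i, (d + h) i t = ∑ i, d i t + ∑ i, h i t := sum_add_distrib
  rw [hlin, hquad, hagg]
  ring

theorem aggregateProfit_le_of_stationary {β γ : ι → ℝ} {ε : κ → ℝ} (hγ : ∀ t, 0 ≤ γ t)
    (hε : ∀ i, 0 ≤ ε i) {d dstar : κ → ι → ℝ} {ν : κ → ℝ}
    (hstat : ∀ i t, β t + 2 * γ t * ∑ j, dstar j t + ε i * dstar i t = ν i)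
    (hd : ∀ i, ∑ t, d i t = ∑ t, dstar i t) :
    aggregateProfit β γ ε d ≤ aggregateProfit β γ ε dstar := by
  have hfirst : ∑ t, ∑ i, (β t + 2 * γ t * ∑ j, dstar j t + ε i * dstar i t) * (d - dstar) i t
      = 0 := by
    simp only [hstat, Pi.sub_apply]
    rw [sum_comm]
    refine sum_eq_zero fun i _ => ?_
    rw [← mul_sum, sum_sub_distrib, hd i, sub_self, mul_zero]
  have hsecond : 0 ≤ ∑ t, (γ t * (∑ i, (d - dstar) i t) ^ 2
      + ∑ i, ε i / 2 * ((d - dstar) i t) ^ 2) :=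
    sum_nonneg fun t _ => add_nonneg (mul_nonneg (hγ t) (sq_nonneg _))
      (sum_nonneg fun i _ => mul_nonneg (div_nonneg (hε i) zero_le_two) (sq_nonneg _))
  have h := aggregateProfit_add β γ ε dstar (d - dstar)
  rw [add_sub_cancel] at h
  linarith

section WeightedMean

variable (β z : ι → ℝ) {ν : ℝ}

theorem sum_sub_div_eq_mul (hν : ν * ∑ k, 1 / z k = ∑ k, β k / z k) (t : ι) :
    ∑ k, (β k - β t) / z k = (ν - β t) * ∑ k, 1 / z k := by
  simp only [sub_div, sum_sub_distrib, ← hν, mul_sum, mul_one_div]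

theorem sum_sub_div_eq_zero (hν : ν * ∑ k, 1 / z k = ∑ k, β k / z k) :
    ∑ t, (ν - β t) / z t = 0 := by
  simp only [sub_div, sum_sub_distrib, ← hν, mul_sum, mul_one_div, sub_self]

end WeightedMean

end

theorem stationary_of_eq_div {β γ z : ι → ℝ} {ε : κ → ℝ} {ν : ℝ} (hε : ∀ i, ε i ≠ 0)
    (hz : ∀ t, z t = 1 + 2 * γ t * ∑ j, 1 / ε j) (hz0 : ∀ t, z t ≠ 0) {d : κ → ι → ℝ}
    (hd : ∀ i t, d i t = (ν - β t) / z t / ε i) (i : κ) (t : ι) :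
    β t + 2 * γ t * ∑ j, d j t + ε i * d i t = ν := by
  have hagg : ∑ j, d j t = (ν - β t) / z t * ∑ j, 1 / ε j := by
    simp only [hd, mul_sum, mul_one_div]
  rw [hagg, hd, mul_div_cancel₀ _ (hε i)]
  calc β t + 2 * γ t * ((ν - β t) / z t * ∑ j, 1 / ε j) + (ν - β t) / z t
      = β t + (1 + 2 * γ t * ∑ j, 1 / ε j) * ((ν - β t) / z t) := by ring
    _ = ν := by rw [← hz t, mul_div_cancel₀ _ (hz0 t)]; ring

end StorageArbitrage

open StorageArbitrage in
theorem gc_multiperiod_optimal_general (T n : ℕ) (hT : 1 ≤ T)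
    (β : Fin T → ℝ) (γ : Fin T → ℝ) (hγ : ∀ t, 0 < γ t)
    (ε : Fin n → ℝ) (hε : ∀ i, 0 < ε i)
    (S : ℝ) (hS : S = ∑ j, 1 / ε j)
    (z : Fin T → ℝ) (hz : ∀ t, z t = 1 + 2 * γ t * S)
    (C : ℝ) (hC : C = ∑ k, 1 / z k)
    (dstar : Fin n → Fin T → ℝ)
    (hdstar : ∀ i t, dstar i t = (∑ k, (β k - β t) / z k) / (ε i * z t * C))
    (F : (Fin n → Fin T → ℝ) → ℝ)
    (hF : ∀ d : Fin n → Fin T → ℝ,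
      F d = ∑ t, (-(β t) * (∑ i, d i t) - γ t * (∑ i, d i t) ^ 2
        - ∑ i, ε i / 2 * (d i t) ^ 2)) :
    (∀ i, ∑ t, dstar i t = 0) ∧
    (∀ d : Fin n → Fin T → ℝ, (∀ i, ∑ t, d i t = 0) → F d ≤ F dstar) := by
  subst hS hC
  have hS : 0 ≤ ∑ j, 1 / ε j := sum_nonneg fun j _ => (one_div_pos.mpr (hε j)).le
  have hzpos : ∀ t, 0 < z t := fun t => by
    rw [hz t]
    exact add_pos_of_pos_of_nonneg one_pos (mul_nonneg (mul_nonneg zero_le_two (hγ t).le) hS)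
  have hC : ∑ k, 1 / z k ≠ 0 := by
    have : Nonempty (Fin T) := ⟨⟨0, hT⟩⟩
    exact (sum_pos (fun k _ => one_div_pos.mpr (hzpos k)) univ_nonempty).ne'
  obtain ⟨ν, hν⟩ : ∃ ν, ν * ∑ k, 1 / z k = ∑ k, β k / z k := ⟨_, div_mul_cancel₀ _ hC⟩
  have hdstar' : ∀ i t, dstar i t = (ν - β t) / z t / ε i := fun i t => by
    rw [hdstar, sum_sub_div_eq_mul β z hν]
    have := (hε i).ne'
    field_simp
  have hfeas : ∀ i, ∑ t, dstar i t = 0 := fun i => by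
    simp only [hdstar', ← sum_div, sum_sub_div_eq_zero β z hν, zero_div]
  refine ⟨hfeas, fun d hd => ?_⟩
  rw [show F = aggregateProfit β γ ε from funext hF]
  exact aggregateProfit_le_of_stationary (fun t => (hγ t).le) (fun i => (hε i).le)
    (stationary_of_eq_div (fun i => (hε i).ne') hz (fun t => (hzpos t).ne') hdstar')
    fun i => by rw [hd i, hfeas i]

/-- the multi-period grand-coalition solution `d*` maximizes the
aggregate profit
`F(d) = ∑ₜ [ −βₜ ∑ᵢ d i t − γₜ (∑ᵢ d i t)² − ∑ᵢ (εᵢ/2)(d i t)² ]`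
over all profiles satisfying the zero-net-energy constraints. -/
theorem gc_multiperiod_optimal (T n : ℕ) (hT : 1 ≤ T) (hn : 1 ≤ n)
    (β : Fin T → ℝ) (γ : Fin T → ℝ) (hγ : ∀ t, 0 < γ t)
    (ε : Fin n → ℝ) (hε : ∀ i, 0 < ε i)
    (S : ℝ) (hS : S = ∑ j, 1 / ε j)
    (z : Fin T → ℝ) (hz : ∀ t, z t = 1 + 2 * γ t * S)
    (C : ℝ) (hC : C = ∑ k, 1 / z k)
    (dstar : Fin n → Fin T → ℝ)
    (hdstar : ∀ i t, dstar i t = (∑ k, (β k - β t) / z k) / (ε i * z t * C))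
    (F : (Fin n → Fin T → ℝ) → ℝ)
    (hF : ∀ d : Fin n → Fin T → ℝ,
      F d = ∑ t, (-(β t) * (∑ i, d i t) - γ t * (∑ i, d i t) ^ 2
        - ∑ i, ε i / 2 * (d i t) ^ 2)) :
    (∀ i, ∑ t, dstar i t = 0) ∧
    (∀ d : Fin n → Fin T → ℝ, (∀ i, ∑ t, d i t = 0) → F d ≤ F dstar) :=
  gc_multiperiod_optimal_general T n hT β γ hγ ε hε S hS z hz C hC dstar hdstar F hF
end

section
/- Consider the two-period simultaneous-move aggregator–storage game: the aggregator chooses prices (τ^[1], τ^[2]) ∈ [τmin, τmax]², the storage chooses (d^[1], d^[2]) ∈ ℝ² with d^[1] + d^[2] = 0, the aggregator's payoff is Σ_{t=1}^2 (τ^[t] − β^[t] − γ d^[t]) d^[t], and the storage's payoff is Σ_{t=1}^2 ( −τ^[t] d^[t] − (ε/2)(d^[t])² ), where γ > 0, ε > 0, β^[1], β^[2] ∈ ℝ, and τmin ≤ τmax. Then every Nash equilibrium (τ, d) of this game satisfies d^[1] = d^[2] = 0, and consequently both players earn zero profit in every Nash equilibrium (Lemma 4). -/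
/-!
Swapping the two prices is always feasible for the aggregator, and since `d₁ = -d₀` it turns the
storage's bill `∑ τₜ dₜ` into its negative; optimality of `τ` therefore forces `∑ τₜ dₜ ≥ 0`.
The storage, on the other hand, can secure payoff `0` by not trading, so
`0 ≤ -∑ τₜ dₜ - (ε/2) ∑ dₜ² ≤ -(ε/2) ∑ dₜ²`, whence `d = 0`.
-/

open Finset

section Payoffs

variable {ι : Type*} [Fintype ι]

noncomputable def aggregatorPayoff (β : ι → ℝ) (γ : ℝ) (τ d : ι → ℝ) : ℝ :=
  ∑ t, (τ t - β t - γ * d t) * d t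

noncomputable def storagePayoff (ε : ℝ) (τ d : ι → ℝ) : ℝ :=
  ∑ t, (-(τ t) * d t - ε / 2 * d t ^ 2)

@[simp]
theorem aggregatorPayoff_zero_right (β : ι → ℝ) (γ : ℝ) (τ : ι → ℝ) :
    aggregatorPayoff β γ τ 0 = 0 := by
  simp [aggregatorPayoff]

@[simp]
theorem storagePayoff_zero_right (ε : ℝ) (τ : ι → ℝ) : storagePayoff ε τ 0 = 0 := by
  simp [storagePayoff]

theorem aggregatorPayoff_sub_aggregatorPayoff (β : ι → ℝ) (γ : ℝ) (τ' τ d : ι → ℝ) :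
    aggregatorPayoff β γ τ' d - aggregatorPayoff β γ τ d = ∑ t, (τ' t - τ t) * d t := by
  simp only [aggregatorPayoff, ← sum_sub_distrib]
  exact sum_congr rfl fun t _ => by ring

theorem storagePayoff_eq (ε : ℝ) (τ d : ι → ℝ) :
    storagePayoff ε τ d = -∑ t, τ t * d t - ε / 2 * ∑ t, d t ^ 2 := by
  simp only [storagePayoff, sum_sub_distrib, mul_sum, ← sum_neg_distrib, neg_mul]

theorem eq_zero_of_storagePayoff_nonneg {ε : ℝ} (hε : 0 < ε) {τ d : ι → ℝ}
    (hbill : 0 ≤ ∑ t, τ t * d t) (hpay : 0 ≤ storagePayoff ε τ d) : d = 0 := by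
  have hsq : ∑ t, d t ^ 2 = 0 := by
    rw [storagePayoff_eq] at hpay
    have hnonneg : 0 ≤ ∑ t, d t ^ 2 := sum_nonneg fun t _ => sq_nonneg (d t)
    nlinarith
  have hsq' : (fun t => d t ^ 2) = 0 :=
    (Fintype.sum_eq_zero_iff_of_nonneg fun t => sq_nonneg (d t)).1 hsq
  funext t
  exact pow_eq_zero_iff two_ne_zero |>.1 (congrFun hsq' t)

end Payoffs

theorem sum_rev_mul_eq_neg_sum_mul {τ d : Fin 2 → ℝ} (hd : d 0 + d 1 = 0) :
    ∑ t, τ t.rev * d t = -∑ t, τ t * d t := by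
  simp [Fin.sum_univ_two, eq_neg_of_add_eq_zero_right hd]

theorem sum_mul_nonneg_of_aggregatorPayoff_le {β : Fin 2 → ℝ} {γ : ℝ} {s : Set ℝ}
    {τ d : Fin 2 → ℝ} (hd : d 0 + d 1 = 0) (hτ : ∀ t, τ t ∈ s)
    (hbest : ∀ τ' : Fin 2 → ℝ, (∀ t, τ' t ∈ s) →
      aggregatorPayoff β γ τ' d ≤ aggregatorPayoff β γ τ d) :
    0 ≤ ∑ t, τ t * d t := by
  have hswap := hbest (fun t => τ t.rev) fun t => hτ t.rev
  have hgain := aggregatorPayoff_sub_aggregatorPayoff β γ (fun t => τ t.rev) τ d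
  simp only [sub_mul, sum_sub_distrib, sum_rev_mul_eq_neg_sum_mul hd] at hgain
  linarith

theorem aggregator_storage_ne_zero_profit_general
    (γ ε τmin τmax : ℝ) (hε : 0 < ε)
    (β : Fin 2 → ℝ) (τ d : Fin 2 → ℝ)
    (hd : d 0 + d 1 = 0)
    (hτbox : ∀ t, τ t ∈ Set.Icc τmin τmax)
    (hagg : ∀ τ' : Fin 2 → ℝ, (∀ t, τ' t ∈ Set.Icc τmin τmax) →
      (∑ t, (τ' t - β t - γ * d t) * d t) ≤ ∑ t, (τ t - β t - γ * d t) * d t)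
    (hsto : ∀ d' : Fin 2 → ℝ, d' 0 + d' 1 = 0 →
      (∑ t, (-(τ t) * d' t - ε / 2 * (d' t) ^ 2)) ≤
        ∑ t, (-(τ t) * d t - ε / 2 * (d t) ^ 2)) :
    (d 0 = 0 ∧ d 1 = 0) ∧
    (∑ t, (τ t - β t - γ * d t) * d t) = 0 ∧
    (∑ t, (-(τ t) * d t - ε / 2 * (d t) ^ 2)) = 0 := by
  have hbill : 0 ≤ ∑ t, τ t * d t := sum_mul_nonneg_of_aggregatorPayoff_le hd hτbox hagg
  have hpay : 0 ≤ storagePayoff ε τ d :=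
    (storagePayoff_zero_right ε τ).symm.le.trans (hsto 0 (by simp))
  obtain rfl : d = 0 := eq_zero_of_storagePayoff_nonneg hε hbill hpay
  exact ⟨⟨rfl, rfl⟩, aggregatorPayoff_zero_right β γ τ, storagePayoff_zero_right ε τ⟩

/-- Lemma 4: in the two-period simultaneous-move
aggregator–storage game, every Nash equilibrium `(τ, d)` — where `τ` maximizes
the aggregator's payoff `∑ₜ (τₜ − βₜ − γ dₜ) dₜ` over `[τmin, τmax]²` given `d`,
and `d` maximizes the storage's payoff `∑ₜ (−τₜ dₜ − (ε/2) dₜ²)` over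
`{d : d₁ + d₂ = 0}` given `τ` — satisfies `d = 0`, and both players earn
zero profit. -/
theorem aggregator_storage_ne_zero_profit
    (γ ε τmin τmax : ℝ) (hγ : 0 < γ) (hε : 0 < ε) (hττ : τmin ≤ τmax)
    (β : Fin 2 → ℝ) (τ d : Fin 2 → ℝ)
    (hd : d 0 + d 1 = 0)
    (hτbox : ∀ t, τ t ∈ Set.Icc τmin τmax)
    (hagg : ∀ τ' : Fin 2 → ℝ, (∀ t, τ' t ∈ Set.Icc τmin τmax) →
      (∑ t, (τ' t - β t - γ * d t) * d t) ≤ ∑ t, (τ t - β t - γ * d t) * d t)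
    (hsto : ∀ d' : Fin 2 → ℝ, d' 0 + d' 1 = 0 →
      (∑ t, (-(τ t) * d' t - ε / 2 * (d' t) ^ 2)) ≤
        ∑ t, (-(τ t) * d t - ε / 2 * (d t) ^ 2)) :
    (d 0 = 0 ∧ d 1 = 0) ∧
    (∑ t, (τ t - β t - γ * d t) * d t) = 0 ∧
    (∑ t, (-(τ t) * d t - ε / 2 * (d t) ^ 2)) = 0 :=
  aggregator_storage_ne_zero_profit_general γ ε τmin τmax hε β τ d hd hτbox hagg hsto
end
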